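/- Let K be an integral domain of prime characteristic c. A function f : ℤ≥0 → K is a K-linear combination of basic sum-functions if and only if f is periodic with period a power of c. -/

import Mathlib

/-!
By Vandermonde, `C(n + p ^ r, i) = ∑_{a + b = i} C(n, a) C(p ^ r, b)`, and `p ∣ C(p ^ r, b)` for
`0 < b < p ^ r`; so in characteristic `p` the value `ρ_i(k) = C(i + k, i)` is unchanged by
`k ↦ k + p ^ r` as long as `i < p ^ r`, and every combination of `ρ_0, …, ρ_{n-1}` has period
`p ^ n`. Conversely, the Pascal matrix `(C(i + k, i))_{i, k < N}` equals `L Lᵀ` with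
`L = (C(i, j))` unitriangular (Vandermonde again), so it is invertible over any commutative ring:
the values of `f` on `[0, N)` are matched by a combination of `ρ_0, …, ρ_{N-1}`, and for
`N = p ^ r` two `N`-periodic functions that agree on `[0, N)` agree everywhere.
-/

open Finset Matrix

theorem Nat.add_choose_left_eq_sum_choose_mul_choose (i k : ℕ) :
    (i + k).choose i = ∑ j ∈ range (i + 1), i.choose j * k.choose j := by
  rw [add_comm, Nat.add_choose_eq, Nat.sum_antidiagonal_eq_sum_range_succ_mk]
  refine sum_congr rfl fun j hj => ?_
  rw [Nat.choose_symm (mem_range_succ_iff.mp hj), mul_comm]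

theorem Nat.cast_choose_add_prime_pow {R : Type*} [Semiring R] {p : ℕ} [CharP R p]
    (hp : p.Prime) {r i : ℕ} (hi : i < p ^ r) (n : ℕ) :
    ((n + p ^ r).choose i : R) = n.choose i := by
  rw [Nat.add_choose_eq, Nat.cast_sum, sum_eq_single (i, 0)]
  · simp
  · rintro ⟨a, b⟩ hab hne
    have hb : b ≠ 0 := by rintro rfl; simp_all
    obtain ⟨t, ht⟩ := hp.dvd_choose_pow (n := r) hb (by simp at hab; omega)
    simp [ht]
  · simp

theorem periodic_cast_choose_add_left {R : Type*} [Semiring R] {p : ℕ} [CharP R p]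
    (hp : p.Prime) {r i : ℕ} (hi : i < p ^ r) :
    Function.Periodic (fun k => ((i + k).choose i : R)) (p ^ r) := fun k => by
  simp only [← add_assoc, Nat.cast_choose_add_prime_pow hp hi]

theorem periodic_sum_mul_cast_choose_add_left {R : Type*} [Semiring R] {p : ℕ} [CharP R p]
    (hp : p.Prime) {r n : ℕ} (hn : n ≤ p ^ r) (a : Fin n → R) :
    Function.Periodic (fun k => ∑ i, a i * (((i : ℕ) + k).choose i : R)) (p ^ r) :=
  fun k => sum_congr rfl fun i _ =>
    congrArg (a i * ·) (periodic_cast_choose_add_left hp (i.isLt.trans_le hn) k)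

theorem Matrix.det_of_cast_choose_add (R : Type*) [CommRing R] (n : ℕ) :
    (of fun i k : Fin n => (((i : ℕ) + k).choose i : R)).det = 1 := by
  set L : Matrix (Fin n) (Fin n) R := of fun i j => ((i : ℕ).choose j : R)
  have hL : L.det = 1 := by
    rw [det_of_isLowerTriangular L fun i j hij => by
      simp [L, Nat.choose_eq_zero_of_lt (show (i : ℕ) < j from hij)]]
    simp [L]
  have hLLt : (of fun i k : Fin n => (((i : ℕ) + k).choose i : R)) = L * Lᵀ := by
    ext i k
    simp only [of_apply, mul_apply, transpose_apply, L, Nat.add_choose_left_eq_sum_choose_mul_choose,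
      Nat.cast_sum, Nat.cast_mul]
    rw [Fin.sum_univ_eq_sum_range (fun j => ((i : ℕ).choose j * (k : ℕ).choose j : R))]
    refine sum_subset (range_subset_range.mpr i.isLt) fun j _ hj => ?_
    simp [Nat.choose_eq_zero_of_lt (show (i : ℕ) < j by simpa using hj)]
  rw [hLLt, det_mul, det_transpose, hL, one_mul]

theorem exists_sum_mul_cast_choose_add_eq (R : Type*) [CommRing R] (n : ℕ) (g : ℕ → R) :
    ∃ a : Fin n → R, ∀ k < n, ∑ i : Fin n, a i * (((i : ℕ) + k).choose i : R) = g k := by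
  have hunit : IsUnit (of fun i k : Fin n => (((i : ℕ) + k).choose i : R)).det := by
    rw [det_of_cast_choose_add]; exact isUnit_one
  obtain ⟨a, ha⟩ := vecMul_surjective_iff_isUnit.mpr ((isUnit_iff_isUnit_det _).mpr hunit)
    fun k : Fin n => g k
  exact ⟨a, fun k hk => congrFun ha ⟨k, hk⟩⟩

theorem Function.Periodic.eq_of_forall_lt {α : Type*} {f g : ℕ → α} {n : ℕ} (hn : 0 < n)
    (hf : Function.Periodic f n) (hg : Function.Periodic g n) (h : ∀ k < n, f k = g k) : f = g :=
  funext fun k => by rw [← hf.map_mod_nat, ← hg.map_mod_nat, h _ (Nat.mod_lt k hn)]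

theorem stmt_15_general (K : Type*) [CommRing K] (c : ℕ) (hc : c.Prime)
    [CharP K c] (f : ℕ → K) :
    (∃ n : ℕ, ∃ a : Fin n → K, ∀ k : ℕ,
        f k = ∑ i, a i * ((((i : ℕ) + k).choose (i : ℕ) : ℕ) : K)) ↔
      ∃ r : ℕ, ∀ k : ℕ, f (k + c ^ r) = f k := by
  constructor
  · rintro ⟨n, a, hf⟩
    obtain rfl : f = _ := funext hf
    exact ⟨n, periodic_sum_mul_cast_choose_add_left hc (Nat.lt_pow_self hc.one_lt).le a⟩
  · rintro ⟨r, hf⟩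
    obtain ⟨a, ha⟩ := exists_sum_mul_cast_choose_add_eq K (c ^ r) f
    refine ⟨c ^ r, a, congrFun ?_⟩
    exact Function.Periodic.eq_of_forall_lt (pow_pos hc.pos r) hf
      (periodic_sum_mul_cast_choose_add_left hc le_rfl a) fun k hk => (ha k hk).symm

/-- Over an integral domain `K` of prime characteristic `c`, a function `f : ℕ → K`
is a finite `K`-linear combination of the basic sum-functions `ρ_m(k) = C(m+k,m)` in `K`
iff `f` is periodic with period a power of `c`. -/
theorem stmt_15 (K : Type*) [CommRing K] [IsDomain K] (c : ℕ) (hc : c.Prime)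
    [CharP K c] (f : ℕ → K) :
    (∃ n : ℕ, ∃ a : Fin n → K, ∀ k : ℕ,
        f k = ∑ i, a i * ((((i : ℕ) + k).choose (i : ℕ) : ℕ) : K)) ↔
      ∃ r : ℕ, ∀ k : ℕ, f (k + c ^ r) = f k :=
  stmt_15_general K c hc f
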